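/- Let X, Y be bounded operators on a complex Hilbert space H. Then max{w(X+Y)², w(X−Y)²} ≤ w(X)² + w(Y)² + (1/2)·‖X*X + Y*Y‖ + w(Y*X)². -/

import Mathlib

open scoped InnerProductSpace
open ContinuousLinearMap
noncomputable section
set_option synthInstance.maxHeartbeats 1000000
set_option maxHeartbeats 1000000

variable {H : Type*} [NormedAddCommGroup H] [InnerProductSpace ℂ H] [CompleteSpace H]

/-- The numerical radius of a bounded operator. -/
noncomputable def numRadius (T : H →L[ℂ] H) : ℝ :=
  sSup {r : ℝ | ∃ x : H, ‖x‖ = 1 ∧ r = ‖(⟪T x, x⟫_ℂ)‖}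

/-- The 2×2 block operator [[X, Y],[Z, W]] on H ⊕ H (ℓ² direct sum). -/
noncomputable def blockOp (X Y Z W : H →L[ℂ] H) :
    WithLp 2 (H × H) →L[ℂ] WithLp 2 (H × H) :=
  ((WithLp.prodContinuousLinearEquiv 2 ℂ H H).symm.toContinuousLinearMap) ∘L
    ((X ∘L ContinuousLinearMap.fst ℂ H H + Y ∘L ContinuousLinearMap.snd ℂ H H).prod
      (Z ∘L ContinuousLinearMap.fst ℂ H H + W ∘L ContinuousLinearMap.snd ℂ H H)) ∘L
    ((WithLp.prodContinuousLinearEquiv 2 ℂ H H).toContinuousLinearMap)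

/-! For a unit vector `x`, `‖⟪(X ± Y) x, x⟫‖ ≤ ‖⟪X x, x⟫‖ + ‖⟪Y x, x⟫‖`. In the square of the
right side, Buzano's inequality bounds the cross term `2 ‖⟪X x, x⟫‖ ‖⟪Y x, x⟫‖` by
`‖X x‖ ‖Y x‖ + ‖⟪X x, Y x⟫‖`; by AM-GM the first summand is at most
`½ ⟪(X†X + Y†Y) x, x⟫ ≤ ½ ‖X†X + Y†Y‖`, and the second is `‖⟪(Y†X) x, x⟫‖ ≤ w(Y†X)`. -/

section InnerProductSpace

variable {𝕜 E F : Type*} [RCLike 𝕜] [NormedAddCommGroup E] [InnerProductSpace 𝕜 E]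

/-- Buzano's inequality: `2 ⟪x, a⟫ x / ‖x‖²` is `a` plus its reflection across `𝕜 ∙ x`,
and that reflection has the norm of `a`. -/
theorem two_mul_norm_inner_mul_inner_le (a b x : E) :
    2 * ‖⟪a, x⟫_𝕜 * ⟪x, b⟫_𝕜‖ ≤ (‖a‖ * ‖b‖ + ‖⟪a, b⟫_𝕜‖) * ‖x‖ ^ 2 := by
  have hr : (2 : 𝕜) * (⟪a, x⟫_𝕜 * ⟪x, b⟫_𝕜) =
      (‖x‖ : 𝕜) ^ 2 * ⟪(𝕜 ∙ x).reflection a + a, b⟫_𝕜 := by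
    rcases eq_or_ne x 0 with rfl | hx
    · simp
    have hx' : (‖x‖ : 𝕜) ≠ 0 := by exact_mod_cast norm_ne_zero_iff.2 hx
    rw [Submodule.reflection_singleton_apply, sub_add_cancel, ← ofNat_smul_eq_nsmul (R := 𝕜),
      smul_smul, inner_smul_left]
    simp only [map_mul, map_div₀, map_pow, RCLike.conj_ofReal, map_ofNat, inner_conj_symm]
    field_simp
  calc 2 * ‖⟪a, x⟫_𝕜 * ⟪x, b⟫_𝕜‖ = ‖⟪(𝕜 ∙ x).reflection a + a, b⟫_𝕜‖ * ‖x‖ ^ 2 := by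
        simpa [mul_comm] using congrArg norm hr
    _ ≤ (‖(𝕜 ∙ x).reflection a‖ * ‖b‖ + ‖⟪a, b⟫_𝕜‖) * ‖x‖ ^ 2 := by
        gcongr
        rw [inner_add_left]
        exact (norm_add_le _ _).trans (by gcongr; exact norm_inner_le_norm _ _)
    _ = (‖a‖ * ‖b‖ + ‖⟪a, b⟫_𝕜‖) * ‖x‖ ^ 2 := by rw [LinearIsometryEquiv.norm_map]

variable [NormedAddCommGroup F] [InnerProductSpace 𝕜 F] [CompleteSpace E] [CompleteSpace F]

theorem apply_norm_sq_add_apply_norm_sq_le (X Y : E →L[𝕜] F) (x : E) :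
    ‖X x‖ ^ 2 + ‖Y x‖ ^ 2 ≤ ‖adjoint X ∘L X + adjoint Y ∘L Y‖ * ‖x‖ ^ 2 := by
  calc ‖X x‖ ^ 2 + ‖Y x‖ ^ 2 = RCLike.re ⟪(adjoint X ∘L X + adjoint Y ∘L Y) x, x⟫_𝕜 := by
        rw [apply_norm_sq_eq_inner_adjoint_left, apply_norm_sq_eq_inner_adjoint_left, add_apply,
          inner_add_left, map_add]
    _ ≤ ‖(adjoint X ∘L X + adjoint Y ∘L Y) x‖ * ‖x‖ := re_inner_le_norm _ _
    _ ≤ ‖adjoint X ∘L X + adjoint Y ∘L Y‖ * ‖x‖ ^ 2 := by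
        rw [sq, ← mul_assoc]; gcongr; exact le_opNorm _ x

end InnerProductSpace

section NumRadius

variable {E : Type*} [NormedAddCommGroup E] [InnerProductSpace ℂ E]

theorem numRadius_bddAbove (T : E →L[ℂ] E) :
    BddAbove {r : ℝ | ∃ x : E, ‖x‖ = 1 ∧ r = ‖⟪T x, x⟫_ℂ‖} := by
  refine ⟨‖T‖, ?_⟩
  rintro _ ⟨x, hx, rfl⟩
  calc ‖⟪T x, x⟫_ℂ‖ ≤ ‖T x‖ * ‖x‖ := norm_inner_le_norm _ _
    _ ≤ ‖T‖ * ‖x‖ * ‖x‖ := by gcongr; exact T.le_opNorm x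
    _ = ‖T‖ := by rw [hx, mul_one, mul_one]

theorem norm_inner_le_numRadius (T : E →L[ℂ] E) {x : E} (hx : ‖x‖ = 1) :
    ‖⟪T x, x⟫_ℂ‖ ≤ numRadius T :=
  le_csSup (numRadius_bddAbove T) ⟨x, hx, rfl⟩

theorem numRadius_nonneg (T : E →L[ℂ] E) : 0 ≤ numRadius T :=
  Real.sSup_nonneg fun _ ⟨_, _, hr⟩ => hr ▸ norm_nonneg _

theorem numRadius_sq_le {T : E →L[ℂ] E} {c : ℝ} (hc : 0 ≤ c)
    (h : ∀ x : E, ‖x‖ = 1 → ‖⟪T x, x⟫_ℂ‖ ^ 2 ≤ c) : numRadius T ^ 2 ≤ c := by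
  refine (Real.le_sqrt (numRadius_nonneg T) hc).1 (Real.sSup_le ?_ (Real.sqrt_nonneg c))
  rintro _ ⟨x, hx, rfl⟩
  exact Real.le_sqrt_of_sq_le (h x hx)

end NumRadius

theorem sq_norm_inner_add_norm_inner_le (X Y : H →L[ℂ] H) {x : H} (hx : ‖x‖ = 1) :
    (‖⟪X x, x⟫_ℂ‖ + ‖⟪Y x, x⟫_ℂ‖) ^ 2 ≤
      numRadius X ^ 2 + numRadius Y ^ 2 +
        (1 / 2) * ‖adjoint X * X + adjoint Y * Y‖ + numRadius (adjoint Y * X) := by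
  have hX := norm_inner_le_numRadius X hx
  have hY := norm_inner_le_numRadius Y hx
  have hYX : ‖⟪X x, Y x⟫_ℂ‖ ≤ numRadius (adjoint Y * X) := by
    simpa [mul_apply, adjoint_inner_left] using norm_inner_le_numRadius (adjoint Y * X) hx
  have hbuzano : 2 * (‖⟪X x, x⟫_ℂ‖ * ‖⟪Y x, x⟫_ℂ‖) ≤ ‖X x‖ * ‖Y x‖ + ‖⟪X x, Y x⟫_ℂ‖ := by
    simpa [hx, norm_inner_symm (Y x) x] using
      two_mul_norm_inner_mul_inner_le (𝕜 := ℂ) (X x) (Y x) x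
  have hgram : ‖X x‖ ^ 2 + ‖Y x‖ ^ 2 ≤ ‖adjoint X * X + adjoint Y * Y‖ := by
    simpa [hx, mul_def] using apply_norm_sq_add_apply_norm_sq_le X Y x
  nlinarith [two_mul_le_add_sq ‖X x‖ ‖Y x‖, pow_le_pow_left₀ (norm_nonneg _) hX 2,
    pow_le_pow_left₀ (norm_nonneg _) hY 2]

theorem numRadius_sum_diff_ineq (X Y : H →L[ℂ] H) :
    max (numRadius (X + Y) ^ 2) (numRadius (X - Y) ^ 2) ≤
      numRadius X ^ 2 + numRadius Y ^ 2 +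
        (1 / 2) * ‖adjoint X * X + adjoint Y * Y‖ + numRadius (adjoint Y * X) := by
  have hR : 0 ≤ numRadius X ^ 2 + numRadius Y ^ 2 +
      (1 / 2) * ‖adjoint X * X + adjoint Y * Y‖ + numRadius (adjoint Y * X) := by
    have := numRadius_nonneg (adjoint Y * X)
    positivity
  refine max_le (numRadius_sq_le hR fun x hx => ?_) (numRadius_sq_le hR fun x hx => ?_)
  · refine le_trans ?_ (sq_norm_inner_add_norm_inner_le X Y hx)
    gcongr
    rw [add_apply, inner_add_left]
    exact norm_add_le _ _
  · refine le_trans ?_ (sq_norm_inner_add_norm_inner_le X Y hx)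
    gcongr
    rw [sub_apply, inner_sub_left]
    exact norm_sub_le _ _
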